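/- arXiv:2003.12166 — 2 statements merged into one kernel-verified Lean document; each statement's English description precedes it below -/
import Mathlib

section
/- Let k ≥ 2 be an integer, let A be a k-primitive set of integers greater than 1, and let T be a finite subset of A with |𝒫(T)| = n. If n = k + 1, then |T| ≤ n + 1. -/
open scoped BigOperators ENNReal

/-- `primesOf A` is the set `𝒫(A)` of primes dividing some member of `A`. -/
def primesOf (A : Set ℕ) : Set ℕ := {p : ℕ | p.Prime ∧ ∃ n ∈ A, p ∣ n}

/-- A set of integers greater than 1 is *primitive* if no element divides another. -/
def Primitive (A : Set ℕ) : Prop :=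
  (∀ n ∈ A, 1 < n) ∧ ∀ a ∈ A, ∀ b ∈ A, a ≠ b → ¬a ∣ b

/-- A set `A` of integers greater than 1 with `|A| ≥ k + 1` is *k-primitive* if no element
divides the product of `k` distinct other elements of `A`. -/
def KPrimitive (k : ℕ) (A : Set ℕ) : Prop :=
  (∀ n ∈ A, 1 < n) ∧ (k : ℕ∞) + 1 ≤ A.encard ∧
    ∀ a ∈ A, ∀ B : Finset ℕ, ↑B ⊆ A \ {a} → B.card = k → ¬a ∣ ∏ b ∈ B, b

/-! Call `a ∈ T` dominant if its `p`-adic valuation exceeds that of every other element of `T`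
for some prime `p ∈ 𝒫(T)`. Each prime has at most one dominant element, so if `|T| ≥ k + 3` there
are two non-dominant elements `a ≠ a'`. For a non-dominant `a`, every prime `p` is covered by some
other element `b` with `v_p(a) ≤ v_p(b)`. If one `b` covered two primes, then `b` and one cover
for each of the remaining `k - 1` primes would be at most `k` elements whose product `a` divides.
Hence `a'` covers at most one prime for `a` and vice versa; as every prime is covered in one of
the two directions, `k + 1 ≤ 2`. -/

theorem Nat.dvd_prod_of_forall_exists_factorization_le {a : ℕ} {S : Finset ℕ} (ha : a ≠ 0)
    (hS : 0 ∉ S) (h : ∀ p ∈ a.primeFactors, ∃ b ∈ S, a.factorization p ≤ b.factorization p) :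
    a ∣ ∏ b ∈ S, b := by
  have hS' : ∀ b ∈ S, b ≠ 0 := fun b hb h0 => hS (h0 ▸ hb)
  rw [← Nat.factorization_le_iff_dvd ha (Finset.prod_ne_zero_iff.mpr hS'),
    Nat.factorization_prod hS']
  intro p
  rw [Finset.sum_apply']
  by_cases hp : p ∈ a.primeFactors
  · obtain ⟨b, hb, hab⟩ := h p hp
    exact hab.trans
      (Finset.single_le_sum (f := fun b => b.factorization p) (fun _ _ => Nat.zero_le _) hb)
  · rw [← Nat.support_factorization, Finsupp.notMem_support_iff] at hp
    simp [hp]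

/-- Since `|A| ≥ k + 1`, any at most `k` other elements extend inside `A` to exactly `k`. -/
theorem KPrimitive.not_dvd_prod_of_card_le {k : ℕ} {A : Set ℕ} (hA : KPrimitive k A) {a : ℕ}
    (ha : a ∈ A) {S : Finset ℕ} (hS : ↑S ⊆ A \ {a}) (hSk : S.card ≤ k) :
    ¬a ∣ ∏ b ∈ S, b := by
  intro hdvd
  have hkA : (k : ℕ∞) ≤ (A \ {a}).encard := by
    have h := hA.2.1
    rw [← Set.encard_sdiff_singleton_add_one ha] at h
    exact (ENat.add_le_add_iff_right ENat.one_ne_top).mp h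
  obtain ⟨B, hSB, hBA, hBk⟩ := Set.exists_superset_subset_encard_eq hS
    (by simpa [Set.encard_coe_eq_coe_finsetCard] using hSk) hkA
  have hB : B.Finite := Set.finite_of_encard_eq_coe hBk
  refine hA.2.2 a ha hB.toFinset (by simpa using hBA) ?_
    (hdvd.trans (Finset.prod_dvd_prod_of_subset _ _ _ ?_))
  · rw [hB.encard_eq_coe_toFinset_card] at hBk
    exact_mod_cast hBk
  · intro b hb
    simpa using hSB hb

theorem Finset.exists_card_lt_forall_exists_of_two {ι α : Type*} {R : ι → α → Prop}
    {P : Finset ι} {U : Finset α} (hP : ∀ p ∈ P, ∃ b ∈ U, R p b) {b₀ : α} (hb₀ : b₀ ∈ U)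
    {p q : ι} (hp : p ∈ P) (hq : q ∈ P) (hpq : p ≠ q) (hpb₀ : R p b₀) (hqb₀ : R q b₀) :
    ∃ S ⊆ U, S.card < P.card ∧ ∀ r ∈ P, ∃ b ∈ S, R r b := by
  classical
  have : Nonempty α := ⟨b₀⟩
  choose! w hwU hw using hP
  refine ⟨insert b₀ (((P.erase p).erase q).image w), ?_, ?_, ?_⟩
  · refine Finset.insert_subset hb₀ fun b hb => ?_
    obtain ⟨r, hr, rfl⟩ := Finset.mem_image.mp hb
    exact hwU r (Finset.mem_of_mem_erase (Finset.mem_of_mem_erase hr))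
  · have hcard : ((P.erase p).erase q).card + 2 = P.card := by
      rw [← Finset.card_erase_add_one hp,
        ← Finset.card_erase_add_one (Finset.mem_erase.mpr ⟨hpq.symm, hq⟩)]
    calc _ ≤ (((P.erase p).erase q).image w).card + 1 := Finset.card_insert_le _ _
      _ ≤ ((P.erase p).erase q).card + 1 := by gcongr; exact Finset.card_image_le
      _ < P.card := by omega
  · intro r hr
    by_cases hrpq : r = p ∨ r = q
    · rcases hrpq with rfl | rfl <;> exact ⟨b₀, Finset.mem_insert_self _ _, ‹_›⟩
    · push Not at hrpq
      exact ⟨w r, Finset.mem_insert_of_mem (Finset.mem_image_of_mem w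
        (Finset.mem_erase.mpr ⟨hrpq.2, Finset.mem_erase.mpr ⟨hrpq.1, hr⟩⟩)), hw r hr⟩

theorem Finset.card_filter_exists_isStrictMax_le {ι α β : Type*} [DecidableEq α] [LinearOrder β]
    (T : Finset α) (P : Finset ι) (v : ι → α → β) :
    (T.filter fun a => ∃ p ∈ P, ∀ b ∈ T, b ≠ a → v p b < v p a).card ≤ P.card := by
  classical
  calc _ ≤ (P.biUnion fun p => T.filter fun a => ∀ b ∈ T, b ≠ a → v p b < v p a).card := by
        refine Finset.card_le_card fun a ha => ?_
        obtain ⟨haT, p, hp, hmax⟩ := Finset.mem_filter.mp ha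
        exact Finset.mem_biUnion.mpr ⟨p, hp, Finset.mem_filter.mpr ⟨haT, hmax⟩⟩
    _ ≤ P.card * 1 := by
        refine Finset.card_biUnion_le_card_mul _ _ _ fun p _ => Finset.card_le_one.mpr ?_
        intro a ha a' ha'
        obtain ⟨haT, hmax⟩ := Finset.mem_filter.mp ha
        obtain ⟨ha'T, hmax'⟩ := Finset.mem_filter.mp ha'
        by_contra hne
        exact lt_asymm (hmax a' ha'T (Ne.symm hne)) (hmax' a haT hne)
    _ = P.card := mul_one _

theorem Finset.exists_ne_le_and_le_of_two_lt_card {ι β : Type*} [LinearOrder β] {P : Finset ι}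
    (hP : 2 < P.card) (v w : ι → β) :
    ∃ p ∈ P, ∃ q ∈ P, p ≠ q ∧ ((v p ≤ w p ∧ v q ≤ w q) ∨ (w p ≤ v p ∧ w q ≤ v q)) := by
  obtain ⟨p, hp, q, hq, r, hr, hpq, hpr, hqr⟩ := Finset.two_lt_card.mp hP
  rcases le_total (v p) (w p) with hp' | hp' <;> rcases le_total (v q) (w q) with hq' | hq'
  · exact ⟨p, hp, q, hq, hpq, .inl ⟨hp', hq'⟩⟩
  · rcases le_total (v r) (w r) with hr' | hr'
    · exact ⟨p, hp, r, hr, hpr, .inl ⟨hp', hr'⟩⟩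
    · exact ⟨q, hq, r, hr, hqr, .inr ⟨hq', hr'⟩⟩
  · rcases le_total (v r) (w r) with hr' | hr'
    · exact ⟨q, hq, r, hr, hqr, .inl ⟨hq', hr'⟩⟩
    · exact ⟨p, hp, r, hr, hpr, .inr ⟨hp', hr'⟩⟩
  · exact ⟨p, hp, q, hq, hpq, .inr ⟨hp', hq'⟩⟩

theorem KPrimitive.not_factorization_le_of_ne {k : ℕ} {A : Set ℕ} (hA : KPrimitive k A)
    {a : ℕ} (ha : a ∈ A) {P U : Finset ℕ} (haP : a.primeFactors ⊆ P) (hPk : P.card ≤ k + 1)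
    (hUA : ↑U ⊆ A \ {a}) (hcov : ∀ p ∈ P, ∃ b ∈ U, a.factorization p ≤ b.factorization p)
    {b : ℕ} (hb : b ∈ U) {p q : ℕ} (hp : p ∈ P) (hq : q ∈ P) (hpq : p ≠ q) :
    ¬(a.factorization p ≤ b.factorization p ∧ a.factorization q ≤ b.factorization q) := by
  rintro ⟨hpb, hqb⟩
  obtain ⟨S, hSU, hSP, hS⟩ :=
    Finset.exists_card_lt_forall_exists_of_two hcov hb hp hq hpq hpb hqb
  have hSA : ↑S ⊆ A \ {a} := (Finset.coe_subset.mpr hSU).trans hUA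
  refine hA.not_dvd_prod_of_card_le ha hSA (by omega) ?_
  refine Nat.dvd_prod_of_forall_exists_factorization_le (by have := hA.1 a ha; omega)
    (fun h0 => by have := hA.1 0 (hSA h0).1; omega) fun r hr => hS r (haP hr)

theorem primesOf_coe_finset {T : Finset ℕ} (hT : 0 ∉ T) :
    primesOf ↑T = ↑(T.biUnion Nat.primeFactors) := by
  ext p
  simp only [primesOf, Set.mem_ofPred_eq, Finset.coe_biUnion, Finset.mem_coe, Set.mem_iUnion,
    Nat.mem_primeFactors, exists_prop]
  constructor
  · rintro ⟨hp, t, ht, hpt⟩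
    exact ⟨t, ht, hp, hpt, fun h0 => hT (h0 ▸ ht)⟩
  · rintro ⟨t, ht, hp, hpt, -⟩
    exact ⟨hp, t, ht, hpt⟩

/-- If `A` is `k`-primitive (`k ≥ 2`) and `T ⊆ A` is finite with `|𝒫(T)| = n = k + 1`,
then `|T| ≤ n + 1`. -/
theorem card_le_succ_of_primesOf_card_eq_succ (k : ℕ) (hk : 2 ≤ k) (A : Set ℕ)
    (hA : KPrimitive k A) (T : Finset ℕ) (hTA : ↑T ⊆ A)
    (n : ℕ) (hn : (primesOf ↑T).ncard = n) (hnk : n = k + 1) :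
    T.card ≤ n + 1 := by
  classical
  by_contra! hTn
  set P := T.biUnion Nat.primeFactors
  have hP : P.card = k + 1 := by
    rw [← hnk, ← hn, primesOf_coe_finset fun h0 => by have := hA.1 0 (hTA h0); omega,
      Set.ncard_coe_finset]
  set D := T.filter fun a =>
    ∃ p ∈ P, ∀ b ∈ T, b ≠ a → b.factorization p < a.factorization p
  have hD : 1 < (T \ D).card := by
    have := Finset.card_filter_exists_isStrictMax_le T P fun p b => b.factorization p
    rw [Finset.card_sdiff_of_subset (Finset.filter_subset _ T)]
    omega
  have key : ∀ a ∈ T \ D, ∀ b ∈ T, b ≠ a → ∀ p ∈ P, ∀ q ∈ P, p ≠ q →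
      ¬(a.factorization p ≤ b.factorization p ∧ a.factorization q ≤ b.factorization q) := by
    intro a ha b hb hba p hp q hq hpq
    obtain ⟨haT, haD⟩ := Finset.mem_sdiff.mp ha
    simp only [D, Finset.mem_filter, haT, true_and, not_exists, not_and, not_forall,
      not_lt] at haD
    refine hA.not_factorization_le_of_ne (hTA haT) (Finset.subset_biUnion_of_mem _ haT)
      hP.le (U := T.erase a) ?_ (fun r hr => ?_) (Finset.mem_erase.mpr ⟨hba, hb⟩) hp hq hpq
    · intro c hc
      obtain ⟨hca, hcT⟩ := Finset.mem_erase.mp hc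
      exact ⟨hTA hcT, hca⟩
    · obtain ⟨c, hc, hca, hac⟩ := haD r hr
      exact ⟨c, Finset.mem_erase.mpr ⟨hca, hc⟩, hac⟩
  obtain ⟨a, ha, a', ha', hne⟩ := Finset.one_lt_card.mp hD
  obtain ⟨p, hp, q, hq, hpq, hle | hle⟩ := Finset.exists_ne_le_and_le_of_two_lt_card
    (by omega : 2 < P.card) (fun p => a.factorization p) fun p => a'.factorization p
  · exact key a ha a' (Finset.mem_sdiff.mp ha').1 (Ne.symm hne) p hp q hq hpq hle
  · exact key a' ha' a (Finset.mem_sdiff.mp ha).1 hne p hp q hq hpq hle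
end

section
/- Let λ ≥ 0.79 be real and let T be a 2-primitive set of integers greater than 1 such that for every prime p ∈ 𝒫(T) one has Σ_{t∈T, p∣t} t^{−λ} > p^{−λ}. Then every t ∈ T has at least 3 prime factors counted with multiplicity, i.e., Ω(t) ≥ 3. -/
/-!
An element `t` of `T` with `Ω(t) ≤ 2` is `p`, `pq` or `p²`. The weight condition at a prime
`p ∣ t` forces a second multiple `s ≠ t` of `p` in `T`, since `t^{-λ} ≤ p^{-λ}`. For `t = p` this
gives `t ∣ s`, and for `t = pq` the second multiples of `p` and `q` give `t ∣ s` or `t ∣ s s'`,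
all excluded by 2-primitivity. For `t = p²` write `s = pm` with `p ∤ m`; 2-primitivity leaves
`{p², pm}` as the only multiples of `p` in `T`, whose weight `p^{-λ}(p^{-λ} + m^{-λ})` is at most
`p^{-λ}` because `2^{-λ} + 3^{-λ} ≤ 1` for `λ ≥ 0.79`.
-/

open scoped BigOperators ENNReal

theorem KPrimitive.primitive {k : ℕ} {A : Set ℕ} (hA : KPrimitive k A) (hk : 1 ≤ k) :
    Primitive A := by
  refine ⟨hA.1, fun a ha b hb hab hdvd => ?_⟩
  have hsize : (k : ℕ∞) ≤ (A \ {a}).encard := by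
    have h := hA.2.1
    rw [← Set.encard_sdiff_singleton_add_one ha] at h
    exact (WithTop.add_le_add_iff_right ENat.one_ne_top).1 h
  obtain ⟨B, hbB, hBA, hB⟩ := Set.exists_superset_subset_encard_eq
    (Set.singleton_subset_iff.2 (show b ∈ A \ {a} from ⟨hb, hab.symm⟩)) (by simpa using hk) hsize
  have hfin := Set.finite_of_encard_eq_coe hB
  have hcard : hfin.toFinset.card = k := by
    have h := hfin.encard_eq_coe_toFinset_card
    rw [hB] at h
    exact_mod_cast h.symm
  exact hA.2.2 a ha hfin.toFinset (by simpa using hBA) hcard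
    (hdvd.trans (Finset.dvd_prod_of_mem _ (by simpa using hbB)))

theorem KPrimitive.not_dvd_mul {A : Set ℕ} (hA : KPrimitive 2 A) {a b c : ℕ} (ha : a ∈ A)
    (hb : b ∈ A) (hc : c ∈ A) (hba : b ≠ a) (hca : c ≠ a) (hbc : b ≠ c) : ¬a ∣ b * c := by
  have h := hA.2.2 a ha {b, c} (by simp [Set.insert_subset_iff, hb, hc, hba, hca])
    (Finset.card_pair hbc)
  rwa [Finset.prod_pair hbc] at h

theorem Nat.prime_or_exists_mul_of_length_primeFactorsList_le_two {n : ℕ} (hn : 1 < n)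
    (h : n.primeFactorsList.length ≤ 2) :
    n.Prime ∨ ∃ p q, p.Prime ∧ q.Prime ∧ n = p * q := by
  have hprod := Nat.prod_primeFactorsList (n := n) (by omega)
  have hprime : ∀ r ∈ n.primeFactorsList, r.Prime := fun _ => Nat.prime_of_mem_primeFactorsList
  match hL : n.primeFactorsList, h with
  | [], _ => simp [hL] at hprod; omega
  | [p], _ =>
    simp only [hL, List.prod_singleton, List.mem_singleton, forall_eq] at hprod hprime
    exact .inl (hprod ▸ hprime)
  | [p, q], _ =>
    simp only [hL, List.prod_cons, List.prod_nil, mul_one, List.mem_cons, List.not_mem_nil,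
      or_false, forall_eq_or_imp, forall_eq] at hprod hprime
    exact .inr ⟨p, q, hprime.1, hprime.2, hprod.symm⟩

theorem ENNReal.tsum_subtype_le_sum_of_subset {α : Type*} (f : α → ℝ≥0∞) {s : Set α}
    {t : Finset α} (h : s ⊆ t) : ∑' x : s, f x ≤ ∑ x ∈ t, f x :=
  (ENNReal.tsum_mono_subtype f h).trans_eq (Finset.tsum_subtype t f)

theorem Real.rpow_neg_div_le {b c : ℝ} {m n : ℕ} (hb : 0 < b) (hc : 0 ≤ c) (hn : n ≠ 0)
    (h : (b ^ m)⁻¹ ≤ c ^ n) : b ^ (-(m / n : ℝ)) ≤ c := by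
  refine le_of_pow_le_pow_left₀ hn hc ?_
  rwa [← Real.rpow_mul_natCast hb.le, neg_mul, div_mul_cancel₀ _ (by exact_mod_cast hn),
    Real.rpow_neg hb.le, Real.rpow_natCast]

theorem two_rpow_neg_add_three_rpow_neg_le_one {lam : ℝ} (hlam : 0.79 ≤ lam) :
    (2 : ℝ) ^ (-lam) + (3 : ℝ) ^ (-lam) ≤ 1 := by
  -- `2^{-0.79} ≈ 0.5786` and `3^{-0.79} ≈ 0.4203`, certified through 100th powers
  have h2 := Real.rpow_neg_div_le (b := 2) (c := 0.579) (m := 79) (n := 100)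
    (by norm_num) (by norm_num) (by norm_num) (by norm_num)
  have h3 := Real.rpow_neg_div_le (b := 3) (c := 0.421) (m := 79) (n := 100)
    (by norm_num) (by norm_num) (by norm_num) (by norm_num)
  have hexp : -lam ≤ -((79 : ℕ) / (100 : ℕ) : ℝ) := by norm_num; linarith
  have h2' := Real.rpow_le_rpow_of_exponent_le (by norm_num : (1 : ℝ) ≤ 2) hexp
  have h3' := Real.rpow_le_rpow_of_exponent_le (by norm_num : (1 : ℝ) ≤ 3) hexp
  linarith

/-- The weight `n^{-λ}`, valued in `ℝ≥0∞`, where a divergent `tsum` is `∞` rather than `0`. -/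
noncomputable def weight (lam : ℝ) (n : ℕ) : ℝ≥0∞ := ENNReal.ofReal ((n : ℝ) ^ (-lam))

theorem weight_anti {lam : ℝ} (hlam : 0 ≤ lam) {m n : ℕ} (hm : 0 < m) (hmn : m ≤ n) :
    weight lam n ≤ weight lam m :=
  ENNReal.ofReal_le_ofReal <|
    Real.rpow_le_rpow_of_nonpos (by exact_mod_cast hm) (by exact_mod_cast hmn) (by linarith)

theorem weight_mul (lam : ℝ) (m n : ℕ) : weight lam (m * n) = weight lam m * weight lam n := by
  simp only [weight, Nat.cast_mul]
  rw [Real.mul_rpow (by positivity) (by positivity), ENNReal.ofReal_mul (by positivity)]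

theorem weight_add_weight_le_one {lam : ℝ} (hlam : 0.79 ≤ lam) {m n : ℕ} (hm : 2 ≤ m)
    (hn : 2 ≤ n) (hmn : 3 ≤ max m n) : weight lam m + weight lam n ≤ 1 := by
  wlog hle : m ≤ n generalizing m n
  · rw [add_comm]
    exact this hn hm (by rwa [max_comm]) (by omega)
  have hlam0 : 0 ≤ lam := by linarith
  calc weight lam m + weight lam n ≤ weight lam 2 + weight lam 3 :=
        add_le_add (weight_anti hlam0 (by norm_num) hm) (weight_anti hlam0 (by norm_num) (by omega))
    _ = ENNReal.ofReal ((2 : ℝ) ^ (-lam) + (3 : ℝ) ^ (-lam)) := by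
        rw [weight, weight, ENNReal.ofReal_add (by positivity) (by positivity)]
        norm_num
    _ ≤ 1 := ENNReal.ofReal_le_one.2 (two_rpow_neg_add_three_rpow_neg_le_one hlam)

def MultiplesOutweighPrimes (lam : ℝ) (T : Set ℕ) : Prop :=
  ∀ p ∈ primesOf T, weight lam p < ∑' t : {t : ℕ | t ∈ T ∧ p ∣ t}, weight lam t

namespace MultiplesOutweighPrimes

variable {lam : ℝ} {T : Set ℕ} (H : MultiplesOutweighPrimes lam T)
include H

theorem exists_ne_mem_dvd (hlam : 0 ≤ lam) {p t : ℕ} (hp : p.Prime) (ht : t ∈ T) (ht0 : t ≠ 0)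
    (hpt : p ∣ t) : ∃ s ∈ T, s ≠ t ∧ p ∣ s := by
  by_contra! hne
  have hsub : {s | s ∈ T ∧ p ∣ s} ⊆ (({t} : Finset ℕ) : Set ℕ) := fun s ⟨hs, hps⟩ =>
    Finset.mem_coe.2 (Finset.mem_singleton.2 (by_contra fun hst => hne s hs hst hps))
  refine (H p ⟨hp, t, ht, hpt⟩).not_ge ?_
  calc ∑' s : {s | s ∈ T ∧ p ∣ s}, weight lam s ≤ ∑ s ∈ {t}, weight lam s :=
        ENNReal.tsum_subtype_le_sum_of_subset _ hsub
    _ = weight lam t := Finset.sum_singleton _ _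
    _ ≤ weight lam p := weight_anti hlam hp.pos (Nat.le_of_dvd (Nat.pos_of_ne_zero ht0) hpt)

theorem prime_notMem (hlam : 0 ≤ lam) (hT : Primitive T) {p : ℕ} (hp : p.Prime) : p ∉ T :=
  fun hpT =>
  let ⟨s, hs, hsp, hps⟩ := H.exists_ne_mem_dvd hlam hp hpT hp.ne_zero dvd_rfl
  hT.2 p hpT s hs hsp.symm hps

theorem mul_notMem (hlam : 0 ≤ lam) (hT : KPrimitive 2 T) {p q : ℕ} (hp : p.Prime)
    (hq : q.Prime) (hpq : p ≠ q) : p * q ∉ T := by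
  intro ht
  have ht0 : p * q ≠ 0 := mul_ne_zero hp.ne_zero hq.ne_zero
  obtain ⟨s, hs, hst, hps⟩ := H.exists_ne_mem_dvd hlam hp ht ht0 (dvd_mul_right p q)
  obtain ⟨s', hs', hs't, hqs'⟩ := H.exists_ne_mem_dvd hlam hq ht ht0 (dvd_mul_left q p)
  by_cases hss : s = s'
  · subst hss
    exact (hT.primitive (by norm_num)).2 _ ht s hs hst.symm
      (((Nat.coprime_primes hp hq).2 hpq).mul_dvd_of_dvd_of_dvd hps hqs')
  · exact hT.not_dvd_mul ht hs hs' hst hs't hss (mul_dvd_mul hps hqs')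

theorem mul_self_notMem (hlam : 0.79 ≤ lam) (hT : KPrimitive 2 T) {p : ℕ} (hp : p.Prime) :
    p * p ∉ T := by
  intro ht
  have hlam0 : 0 ≤ lam := by linarith
  have hprim := hT.primitive (by norm_num)
  obtain ⟨s, hs, hst, m, rfl⟩ :=
    H.exists_ne_mem_dvd hlam0 hp ht (mul_ne_zero hp.ne_zero hp.ne_zero) (dvd_mul_right p p)
  have hpm : ¬p ∣ m := fun hpm => hprim.2 _ ht _ hs hst.symm (mul_dvd_mul_left p hpm)
  have hm1 : m ≠ 1 := by
    rintro rfl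
    exact H.prime_notMem hlam0 hprim hp (by simpa using hs)
  have hm0 : m ≠ 0 := by
    rintro rfl
    simpa using hT.1 _ hs
  have hm3 : 3 ≤ max p m := by
    by_contra! hlt
    obtain rfl : p = 2 := by have := hp.two_le; omega
    obtain rfl : m = 2 := by omega
    exact hpm dvd_rfl
  -- any further multiple `x` of `p` would give `p² ∣ x · pm`
  have hsub : {x | x ∈ T ∧ p ∣ x} ⊆ (({p * p, p * m} : Finset ℕ) : Set ℕ) := by
    rintro x ⟨hx, hpx⟩
    by_contra hx'
    simp only [Finset.coe_insert, Finset.coe_singleton, Set.mem_insert_iff,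
      Set.mem_singleton_iff, not_or] at hx'
    exact hT.not_dvd_mul ht hx hs hx'.1 hst hx'.2 (mul_dvd_mul hpx (dvd_mul_right p m))
  refine (H p ⟨hp, _, ht, dvd_mul_right p p⟩).not_ge ?_
  calc ∑' x : {x | x ∈ T ∧ p ∣ x}, weight lam x ≤ ∑ x ∈ {p * p, p * m}, weight lam x :=
        ENNReal.tsum_subtype_le_sum_of_subset _ hsub
    _ = weight lam p * (weight lam p + weight lam m) := by
        rw [Finset.sum_pair hst.symm, weight_mul, weight_mul, mul_add]
    _ ≤ weight lam p :=
        mul_le_of_le_one_right' (weight_add_weight_le_one hlam hp.two_le (by omega) hm3)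

end MultiplesOutweighPrimes

/-- If `T` is 2-primitive, `λ ≥ 0.79`, and `∑_{t ∈ T_p} t^{-λ} > p^{-λ}` for each
`p ∈ 𝒫(T)`, then every `t ∈ T` satisfies `Ω(t) ≥ 3`, where `Ω` counts prime factors
with multiplicity. -/
theorem omega_ge_three (lam : ℝ) (hlam : 0.79 ≤ lam) (T : Set ℕ) (hT : KPrimitive 2 T)
    (h : ∀ p ∈ primesOf T,
      ENNReal.ofReal (((p : ℕ) : ℝ) ^ (-lam)) <
        ∑' t : {t : ℕ | t ∈ T ∧ p ∣ t}, ENNReal.ofReal (((t : ℕ) : ℝ) ^ (-lam))) :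
    ∀ t ∈ T, 3 ≤ t.primeFactorsList.length := by
  have H : MultiplesOutweighPrimes lam T := h
  have hlam0 : 0 ≤ lam := by linarith
  intro t ht
  by_contra! hlt
  rcases Nat.prime_or_exists_mul_of_length_primeFactorsList_le_two (hT.1 t ht) (by omega) with
    hp | ⟨p, q, hp, hq, rfl⟩
  · exact H.prime_notMem hlam0 (hT.primitive (by norm_num)) hp ht
  · rcases eq_or_ne p q with rfl | hpq
    · exact H.mul_self_notMem hlam hT hp ht
    · exact H.mul_notMem hlam0 hT hp hq hpq ht
end
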